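/- Let R ⊂ ℝ^N be a bounded connected open set and J a continuous nonnegative symmetric kernel with J(0) > 0. There exists a constant C > 0 such that for all z ∈ L²(R) with ∫_R z = 0, ∫_R∫_R J(x-y)(z(y)-z(x))² dy dx ≥ C ∫_R z(x)² dx (nonlocal Poincaré inequality). -/

import Mathlib

/-!
Iterate the kernel inside `R`: `k₀ = k` and `kₙ₊₁(x, y) = ∫_R kₙ(x, w) k(w, y) dw`. As `k > 0`
near the diagonal and `R` is connected, each pair of points of `closure R` is joined by an iterate
with a positive value, so by compactness a single iterate `kₙ` is bounded below by some `c₀ > 0`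
on `R × R`. Splitting `z y - z x` at the intermediate point `w` bounds the energy
`∬ kₙ(x, y) (z y - z x)²` by a multiple of the energy of `k`, while for `z` of mean zero
`∬ c₀ (z y - z x)² = 2 c₀ |R| ∫ z²`.
-/

open MeasureTheory Metric Set Function Bornology
open scoped ENNReal

section Variance

variable {Ω : Type*} [MeasurableSpace Ω] {ν : Measure Ω} [IsFiniteMeasure ν] {z : Ω → ℝ}

theorem integral_sub_const_sq (hz : MemLp z 2 ν) (c : ℝ) :
    ∫ y, (z y - c) ^ 2 ∂ν = ∫ y, z y ^ 2 ∂ν - 2 * c * ∫ y, z y ∂ν + ν.real univ * c ^ 2 := by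
  have h2 : Integrable (fun y => 2 * z y * c) ν :=
    ((hz.integrable one_le_two).const_mul 2).mul_const c
  have h12 : Integrable (fun y => z y ^ 2 - 2 * z y * c) ν := hz.integrable_sq.sub h2
  simp_rw [sub_sq]
  rw [integral_add h12 (integrable_const _), integral_sub hz.integrable_sq h2, integral_mul_const,
    integral_const_mul, integral_const, smul_eq_mul]
  ring

theorem lintegral_lintegral_ofReal_sub_sq (hz : MemLp z 2 ν) :
    ∫⁻ x, ∫⁻ y, ENNReal.ofReal ((z y - z x) ^ 2) ∂ν ∂ν =
      ENNReal.ofReal (2 * ν.real univ * ∫ x, z x ^ 2 ∂ν - 2 * (∫ x, z x ∂ν) ^ 2) := by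
  set I := ∫ x, z x ^ 2 ∂ν with hI
  set m := ∫ x, z x ∂ν with hm
  have h2 : Integrable (fun x => 2 * z x * m) ν :=
    ((hz.integrable one_le_two).const_mul 2).mul_const m
  have h12 : Integrable (fun x => I - 2 * z x * m) ν := (integrable_const I).sub h2
  have h3 : Integrable (fun x => ν.real univ * z x ^ 2) ν := hz.integrable_sq.const_mul _
  have h123 : Integrable (fun x => I - 2 * z x * m + ν.real univ * z x ^ 2) ν := h12.add h3
  have hsq c : Integrable (fun y => (z y - c) ^ 2) ν := (hz.sub (memLp_const c)).integrable_sq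
  have hinner x : ∫⁻ y, ENNReal.ofReal ((z y - z x) ^ 2) ∂ν =
      ENNReal.ofReal (I - 2 * z x * m + ν.real univ * z x ^ 2) := by
    rw [← ofReal_integral_eq_lintegral_ofReal (hsq _) (ae_of_all _ fun _ => sq_nonneg _),
      integral_sub_const_sq hz]
  have hnn x : 0 ≤ I - 2 * z x * m + ν.real univ * z x ^ 2 := by
    rw [← integral_sub_const_sq hz]; exact integral_nonneg fun _ => sq_nonneg _
  rw [lintegral_congr hinner, ← ofReal_integral_eq_lintegral_ofReal h123 (ae_of_all _ hnn),
    integral_add h12 h3, integral_sub (integrable_const I) h2, integral_mul_const,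
    integral_const_mul, integral_const_mul, integral_const, smul_eq_mul]
  rw [← hI, ← hm]
  ring_nf

end Variance

theorem ofReal_sub_sq_le (a b c : ℝ) :
    ENNReal.ofReal ((b - a) ^ 2) ≤
      2 * ENNReal.ofReal ((c - a) ^ 2) + 2 * ENNReal.ofReal ((b - c) ^ 2) := by
  rw [← ENNReal.ofReal_ofNat 2, ← ENNReal.ofReal_mul zero_le_two,
    ← ENNReal.ofReal_mul zero_le_two, ← ENNReal.ofReal_add (by positivity) (by positivity)]
  exact ENNReal.ofReal_le_ofReal (by nlinarith [sq_nonneg (c - a - (b - c))])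

namespace NonlocalPoincare

variable {X : Type*}

section Kernels

variable [MeasurableSpace X] {μ : Measure X} {R : Set X}

noncomputable def kernelComp (μ : Measure X) (R : Set X) (K L : X → X → ℝ) (x y : X) : ℝ :=
  ∫ w in R, K x w * L w y ∂μ

noncomputable def iterKernel (μ : Measure X) (R : Set X) (k : X → X → ℝ) : ℕ → X → X → ℝ
  | 0 => k
  | n + 1 => kernelComp μ R (iterKernel μ R k n) k

theorem iterKernel_nonneg {k : X → X → ℝ} (hk0 : ∀ x y, 0 ≤ k x y) (n : ℕ) (x y : X) :
    0 ≤ iterKernel μ R k n x y := by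
  induction n generalizing y with
  | zero => exact hk0 x y
  | succ n ih => exact integral_nonneg fun w => mul_nonneg (ih w) (hk0 w y)

noncomputable def kernelEnergy (μ : Measure X) (R : Set X) (K : X → X → ℝ) (z : X → ℝ) : ℝ≥0∞ :=
  ∫⁻ x in R, ∫⁻ y in R, ENNReal.ofReal (K x y) * ENNReal.ofReal ((z y - z x) ^ 2) ∂μ ∂μ

theorem kernelEnergy_mono {K L : X → X → ℝ} (hRm : MeasurableSet R)
    (hKL : ∀ x ∈ R, ∀ y ∈ R, K x y ≤ L x y) (z : X → ℝ) :
    kernelEnergy μ R K z ≤ kernelEnergy μ R L z :=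
  setLIntegral_mono' hRm fun x hx => setLIntegral_mono' hRm fun y hy => by
    gcongr; exact hKL x hx y hy

theorem kernelEnergy_const (c : ℝ) (z : X → ℝ) :
    kernelEnergy μ R (fun _ _ => c) z =
      ENNReal.ofReal c * ∫⁻ x in R, ∫⁻ y in R, ENNReal.ofReal ((z y - z x) ^ 2) ∂μ ∂μ := by
  simp_rw [kernelEnergy, lintegral_const_mul' _ _ ENNReal.ofReal_ne_top]

theorem integral_integral_mul_sub_sq_congr_ae {K : X → X → ℝ} {z z' : X → ℝ}
    (h : z =ᵐ[μ.restrict R] z') :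
    ∫ x in R, ∫ y in R, K x y * (z y - z x) ^ 2 ∂μ ∂μ =
      ∫ x in R, ∫ y in R, K x y * (z' y - z' x) ^ 2 ∂μ ∂μ := by
  refine integral_congr_ae ?_
  filter_upwards [h] with x hx
  refine integral_congr_ae ?_
  filter_upwards [h] with y hy
  rw [hx, hy]

end Kernels

variable [PseudoMetricSpace X] [ProperSpace X] {R : Set X}

theorem exists_forall_le_of_isBounded {K : X → X → ℝ} (hK : Continuous (uncurry K))
    (hR : IsBounded R) : ∃ T, ∀ x ∈ R, ∀ y ∈ R, K x y ≤ T := by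
  obtain ⟨T, hT⟩ := (hR.isCompact_closure.prod hR.isCompact_closure).bddAbove_image
    hK.continuousOn
  exact ⟨T, fun x hx y hy => hT ⟨(x, y), ⟨subset_closure hx, subset_closure hy⟩, rfl⟩⟩

variable [MeasurableSpace X] [BorelSpace X] {μ : Measure X} [IsFiniteMeasureOnCompacts μ]

theorem integrableOn_of_continuous_of_isBounded {f : X → ℝ}
    (hf : Continuous f) (hR : IsBounded R) : IntegrableOn f R μ :=
  (hf.locallyIntegrable.integrableOn_isCompact hR.isCompact_closure).mono_set subset_closure

theorem continuous_kernelComp {K L : X → X → ℝ}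
    (hK : Continuous (uncurry K)) (hL : Continuous (uncurry L)) (hR : IsBounded R) :
    Continuous (uncurry (kernelComp μ R K L)) := by
  have := continuous_parametric_integral_of_continuous (μ := μ.restrict R)
    (f := fun (p : X × X) w => K p.1 w * L w p.2) (by fun_prop) hR.isCompact_closure
  rwa [Measure.restrict_restrict isClosed_closure.measurableSet,
    inter_eq_right.2 subset_closure] at this

theorem kernelComp_pos [μ.IsOpenPosMeasure] {K L : X → X → ℝ}
    (hK : Continuous (uncurry K)) (hL : Continuous (uncurry L))
    (hK0 : ∀ x y, 0 ≤ K x y) (hL0 : ∀ x y, 0 ≤ L x y) (hRo : IsOpen R) (hRb : IsBounded R)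
    {x w y : X} (hw : w ∈ closure R) (hxw : 0 < K x w) (hwy : 0 < L w y) :
    0 < kernelComp μ R K L x y := by
  have hcont : Continuous fun u => K x u * L u y := by fun_prop
  rw [kernelComp, setIntegral_pos_iff_support_of_nonneg_ae
    (ae_of_all _ fun u => mul_nonneg (hK0 x u) (hL0 u y))
    (integrableOn_of_continuous_of_isBounded hcont hRb)]
  have hsupp : IsOpen (support fun u => K x u * L u y) := isOpen_ne_fun hcont continuous_const
  exact (hsupp.inter hRo).measure_pos μ
    (mem_closure_iff.1 hw _ hsupp (mul_pos hxw hwy).ne')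

theorem continuous_iterKernel {k : X → X → ℝ} (hk : Continuous (uncurry k)) (hR : IsBounded R)
    (n : ℕ) : Continuous (uncurry (iterKernel μ R k n)) := by
  induction n with
  | zero => exact hk
  | succ n ih => exact continuous_kernelComp ih hk hR

section Positivity

variable [μ.IsOpenPosMeasure] {k : X → X → ℝ} {δ : ℝ}

theorem iterKernel_succ_pos (hk : Continuous (uncurry k)) (hk0 : ∀ x y, 0 ≤ k x y)
    (hkδ : ∀ x y, dist x y < δ → 0 < k x y) (hRo : IsOpen R) (hRb : IsBounded R) {n : ℕ}
    {x w y : X} (hw : w ∈ closure R) (hxw : 0 < iterKernel μ R k n x w) (hwy : dist w y < δ) :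
    0 < iterKernel μ R k (n + 1) x y :=
  kernelComp_pos (continuous_iterKernel hk hRb n) hk (iterKernel_nonneg hk0 n) hk0 hRo hRb hw
    hxw (hkδ w y hwy)

theorem iterKernel_pos_of_le (hk : Continuous (uncurry k)) (hk0 : ∀ x y, 0 ≤ k x y)
    (hδ : 0 < δ) (hkδ : ∀ x y, dist x y < δ → 0 < k x y) (hRo : IsOpen R) (hRb : IsBounded R)
    {n m : ℕ} {x y : X} (hy : y ∈ closure R) (hxy : 0 < iterKernel μ R k n x y) (hnm : n ≤ m) :
    0 < iterKernel μ R k m x y := by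
  induction m, hnm using Nat.le_induction with
  | base => exact hxy
  | succ m _ ih => exact iterKernel_succ_pos hk hk0 hkδ hRo hRb hy ih (by simpa using hδ)

/-- The set of points reachable from `x` is open and relatively closed in the connected set `R`,
because a single kernel step reaches the whole `δ`-neighbourhood of a reachable point of `R`. -/
theorem exists_iterKernel_pos (hk : Continuous (uncurry k)) (hk0 : ∀ x y, 0 ≤ k x y)
    (hδ : 0 < δ) (hkδ : ∀ x y, dist x y < δ → 0 < k x y) (hRo : IsOpen R) (hRc : IsPreconnected R)
    (hRb : IsBounded R) {x y : X} (hx : x ∈ closure R) (hy : y ∈ closure R) :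
    ∃ n, 0 < iterKernel μ R k n x y := by
  set U := ⋃ n, {y | 0 < iterKernel μ R k n x y}
  have hUo : IsOpen U := isOpen_iUnion fun n =>
    isOpen_lt continuous_const ((continuous_iterKernel hk hRb n).comp (Continuous.prodMk_right x))
  have hRU : R ⊆ U := by
    refine hRc.subset_of_closure_inter_subset hUo ?_ ?_
    · obtain ⟨a, hxa, haR⟩ := mem_closure_iff.1 hx _ isOpen_ball (mem_ball_self hδ)
      exact ⟨a, haR, mem_iUnion.2 ⟨0, hkδ x a (by rwa [dist_comm])⟩⟩
    · rintro y ⟨hyU, hyR⟩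
      obtain ⟨a, ⟨haR, hay⟩, haU⟩ := mem_closure_iff_nhds.1 hyU _
        (Filter.inter_mem (hRo.mem_nhds hyR) (ball_mem_nhds y hδ))
      obtain ⟨n, hn⟩ := mem_iUnion.1 haU
      exact mem_iUnion.2 ⟨n + 1, iterKernel_succ_pos hk hk0 hkδ hRo hRb (subset_closure haR) hn hay⟩
  obtain ⟨a, hya, haR⟩ := mem_closure_iff.1 hy _ isOpen_ball (mem_ball_self hδ)
  obtain ⟨n, hn⟩ := mem_iUnion.1 (hRU haR)
  exact ⟨n + 1, iterKernel_succ_pos hk hk0 hkδ hRo hRb (subset_closure haR) hn hya⟩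

theorem exists_pos_le_iterKernel (hk : Continuous (uncurry k)) (hk0 : ∀ x y, 0 ≤ k x y)
    (hδ : 0 < δ) (hkδ : ∀ x y, dist x y < δ → 0 < k x y) (hRo : IsOpen R) (hRc : IsConnected R)
    (hRb : IsBounded R) : ∃ n c, 0 < c ∧ ∀ x ∈ R, ∀ y ∈ R, c ≤ iterKernel μ R k n x y := by
  set Q := closure R ×ˢ closure R
  have hQ : IsCompact Q := hRb.isCompact_closure.prod hRb.isCompact_closure
  have hcont n := continuous_iterKernel (μ := μ) hk hRb n
  obtain ⟨t, ht⟩ := hQ.elim_finite_subcover (fun n => {p | 0 < iterKernel μ R k n p.1 p.2})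
    (fun n => isOpen_lt continuous_const (hcont n)) fun p hp =>
      mem_iUnion.2 (exists_iterKernel_pos hk hk0 hδ hkδ hRo hRc.isPreconnected hRb hp.1 hp.2)
  have hpos : ∀ p ∈ Q, 0 < iterKernel μ R k (t.sup id) p.1 p.2 := fun p hp => by
    obtain ⟨n, hnt, hn⟩ := mem_iUnion₂.1 (ht hp)
    exact iterKernel_pos_of_le hk hk0 hδ hkδ hRo hRb hp.2 hn (Finset.le_sup (f := id) hnt)
  obtain ⟨x₀, hx₀⟩ := hRc.nonempty
  obtain ⟨p₀, hp₀, hmin⟩ := hQ.exists_isMinOn ⟨(x₀, x₀), subset_closure hx₀, subset_closure hx₀⟩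
    (hcont (t.sup id)).continuousOn
  exact ⟨t.sup id, _, hpos p₀ hp₀, fun x hx y hy =>
    isMinOn_iff.1 hmin (x, y) ⟨subset_closure hx, subset_closure hy⟩⟩

end Positivity

theorem ofReal_kernelComp_mul_le {K L : X → X → ℝ} (hK : Continuous (uncurry K))
    (hL : Continuous (uncurry L)) (hK0 : ∀ x y, 0 ≤ K x y) (hL0 : ∀ x y, 0 ≤ L x y)
    (hRm : MeasurableSet R) (hRb : IsBounded R) {S T : ℝ} (hKT : ∀ x ∈ R, ∀ y ∈ R, K x y ≤ T)
    (hLS : ∀ x ∈ R, ∀ y ∈ R, L x y ≤ S) {z : X → ℝ} (hz : Measurable z) {x y : X}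
    (hx : x ∈ R) (hy : y ∈ R) :
    ENNReal.ofReal (kernelComp μ R K L x y) * ENNReal.ofReal ((z y - z x) ^ 2) ≤
      2 * ENNReal.ofReal S *
          ∫⁻ w in R, ENNReal.ofReal (K x w) * ENNReal.ofReal ((z w - z x) ^ 2) ∂μ +
        2 * ENNReal.ofReal T *
          ∫⁻ w in R, ENNReal.ofReal (L w y) * ENNReal.ofReal ((z y - z w) ^ 2) ∂μ := by
  have hKx : Measurable fun w => ENNReal.ofReal (K x w) * ENNReal.ofReal ((z w - z x) ^ 2) := by
    have : Measurable fun w => K x w := (hK.comp (Continuous.prodMk_right x)).measurable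
    fun_prop
  rw [kernelComp, ofReal_integral_eq_lintegral_ofReal
    (integrableOn_of_continuous_of_isBounded (by fun_prop) hRb)
    (ae_of_all _ fun w => mul_nonneg (hK0 x w) (hL0 w y)),
    ← lintegral_mul_const' _ _ ENNReal.ofReal_ne_top,
    ← lintegral_const_mul' _ _ (by finiteness), ← lintegral_const_mul' _ _ (by finiteness),
    ← lintegral_add_left (hKx.const_mul _)]
  refine setLIntegral_mono' hRm fun w hw => ?_
  calc ENNReal.ofReal (K x w * L w y) * ENNReal.ofReal ((z y - z x) ^ 2)
      ≤ ENNReal.ofReal (K x w) * ENNReal.ofReal (L w y) *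
          (2 * ENNReal.ofReal ((z w - z x) ^ 2) + 2 * ENNReal.ofReal ((z y - z w) ^ 2)) := by
        rw [ENNReal.ofReal_mul (hK0 x w)]
        gcongr
        exact ofReal_sub_sq_le _ _ _
    _ = 2 * ENNReal.ofReal (L w y) * (ENNReal.ofReal (K x w) * ENNReal.ofReal ((z w - z x) ^ 2)) +
        2 * ENNReal.ofReal (K x w) *
          (ENNReal.ofReal (L w y) * ENNReal.ofReal ((z y - z w) ^ 2)) := by
        ring
    _ ≤ 2 * ENNReal.ofReal S * (ENNReal.ofReal (K x w) * ENNReal.ofReal ((z w - z x) ^ 2)) +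
        2 * ENNReal.ofReal T * (ENNReal.ofReal (L w y) * ENNReal.ofReal ((z y - z w) ^ 2)) := by
        gcongr
        exacts [hLS w hw y hy, hKT x hx w hw]

theorem kernelEnergy_kernelComp_le {K L : X → X → ℝ} (hK : Continuous (uncurry K))
    (hL : Continuous (uncurry L)) (hK0 : ∀ x y, 0 ≤ K x y) (hL0 : ∀ x y, 0 ≤ L x y)
    (hRm : MeasurableSet R) (hRb : IsBounded R) {S T : ℝ} (hKT : ∀ x ∈ R, ∀ y ∈ R, K x y ≤ T)
    (hLS : ∀ x ∈ R, ∀ y ∈ R, L x y ≤ S) {z : X → ℝ} (hz : Measurable z) :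
    kernelEnergy μ R (kernelComp μ R K L) z ≤
      2 * μ R * (ENNReal.ofReal S * kernelEnergy μ R K z +
        ENNReal.ofReal T * kernelEnergy μ R L z) := by
  set a : X → ℝ≥0∞ := fun x =>
    ∫⁻ w in R, ENNReal.ofReal (K x w) * ENNReal.ofReal ((z w - z x) ^ 2) ∂μ
  set b : X → ℝ≥0∞ := fun y =>
    ∫⁻ w in R, ENNReal.ofReal (L w y) * ENNReal.ofReal ((z y - z w) ^ 2) ∂μ
  have hKg : Measurable
      (uncurry fun x w => ENNReal.ofReal (K x w) * ENNReal.ofReal ((z w - z x) ^ 2)) := by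
    have := hK.measurable; fun_prop
  have ha : Measurable a := hKg.lintegral_prod_right'
  have ha_int : ∫⁻ x in R, a x ∂μ = kernelEnergy μ R K z := rfl
  have hb_int : ∫⁻ y in R, b y ∂μ = kernelEnergy μ R L z := by
    refine lintegral_lintegral_swap (Measurable.aemeasurable ?_)
    have := hL.measurable.comp measurable_swap; fun_prop
  calc kernelEnergy μ R (kernelComp μ R K L) z
      ≤ ∫⁻ x in R, ∫⁻ y in R, (2 * ENNReal.ofReal S * a x + 2 * ENNReal.ofReal T * b y) ∂μ ∂μ :=
        setLIntegral_mono' hRm fun x hx => setLIntegral_mono' hRm fun y hy =>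
          ofReal_kernelComp_mul_le hK hL hK0 hL0 hRm hRb hKT hLS hz hx hy
    _ = ∫⁻ x in R, (2 * ENNReal.ofReal S * a x * μ R +
          2 * ENNReal.ofReal T * ∫⁻ y in R, b y ∂μ) ∂μ := by
        refine lintegral_congr fun x => ?_
        rw [lintegral_add_left measurable_const, setLIntegral_const,
          lintegral_const_mul' _ _ (by finiteness)]
    _ = 2 * μ R * (ENNReal.ofReal S * kernelEnergy μ R K z +
          ENNReal.ofReal T * kernelEnergy μ R L z) := by
        rw [lintegral_add_left ((ha.const_mul _).mul_const _), setLIntegral_const,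
          lintegral_mul_const' _ _ hRb.measure_lt_top.ne, lintegral_const_mul' _ _ (by finiteness),
          ha_int, hb_int]
        ring

theorem exists_kernelEnergy_iterKernel_le {k : X → X → ℝ} (hk : Continuous (uncurry k))
    (hk0 : ∀ x y, 0 ≤ k x y) (hRm : MeasurableSet R) (hRb : IsBounded R) (n : ℕ) :
    ∃ c : ℝ≥0∞, c ≠ ⊤ ∧ ∀ z : X → ℝ, Measurable z →
      kernelEnergy μ R (iterKernel μ R k n) z ≤ c * kernelEnergy μ R k z := by
  induction n with
  | zero => exact ⟨1, ENNReal.one_ne_top, fun z _ => (one_mul _).ge⟩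
  | succ n ih =>
    obtain ⟨c, hc, hcz⟩ := ih
    obtain ⟨S, hS⟩ := exists_forall_le_of_isBounded hk hRb
    obtain ⟨T, hT⟩ := exists_forall_le_of_isBounded (continuous_iterKernel (μ := μ) hk hRb n) hRb
    have hμR : μ R ≠ ⊤ := hRb.measure_lt_top.ne
    refine ⟨2 * μ R * (ENNReal.ofReal S * c + ENNReal.ofReal T), by finiteness, fun z hz => ?_⟩
    calc kernelEnergy μ R (iterKernel μ R k (n + 1)) z
        ≤ 2 * μ R * (ENNReal.ofReal S * kernelEnergy μ R (iterKernel μ R k n) z +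
            ENNReal.ofReal T * kernelEnergy μ R k z) :=
          kernelEnergy_kernelComp_le (continuous_iterKernel hk hRb n) hk (iterKernel_nonneg hk0 n)
            hk0 hRm hRb hT hS hz
      _ ≤ 2 * μ R * (ENNReal.ofReal S * (c * kernelEnergy μ R k z) +
            ENNReal.ofReal T * kernelEnergy μ R k z) := by gcongr; exact hcz z hz
      _ = 2 * μ R * (ENNReal.ofReal S * c + ENNReal.ofReal T) * kernelEnergy μ R k z := by ring

theorem integral_integral_eq_toReal_kernelEnergy {K : X → X → ℝ} (hK : Continuous (uncurry K))
    (hK0 : ∀ x y, 0 ≤ K x y) (hRm : MeasurableSet R) (hRb : IsBounded R) {z : X → ℝ}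
    (hz : Measurable z) (hz2 : MemLp z 2 (μ.restrict R)) :
    ∫ x in R, ∫ y in R, K x y * (z y - z x) ^ 2 ∂μ ∂μ = (kernelEnergy μ R K z).toReal := by
  have : IsFiniteMeasure (μ.restrict R) := isFiniteMeasure_restrict.2 hRb.measure_lt_top.ne
  obtain ⟨S, hS⟩ := exists_forall_le_of_isBounded hK hRb
  have hKz : Measurable (uncurry fun x y => K x y * (z y - z x) ^ 2) := by
    have := hK.measurable; fun_prop
  rw [integral_eq_lintegral_of_nonneg_ae
    (ae_of_all _ fun x => integral_nonneg fun y => mul_nonneg (hK0 x y) (sq_nonneg _))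
    hKz.stronglyMeasurable.integral_prod_right.aestronglyMeasurable]
  congr 1
  refine setLIntegral_congr_fun hRm fun x hx => ?_
  have hint : Integrable (fun y => K x y * (z y - z x) ^ 2) (μ.restrict R) := by
    refine Integrable.mono' (((hz2.sub (memLp_const (z x))).integrable_sq).const_mul S)
      (hKz.comp measurable_prodMk_left).aestronglyMeasurable ?_
    filter_upwards [ae_restrict_mem hRm] with y hy
    rw [Real.norm_of_nonneg (mul_nonneg (hK0 x y) (sq_nonneg _))]
    exact mul_le_mul_of_nonneg_right (hS x hx y hy) (sq_nonneg _)
  rw [ofReal_integral_eq_lintegral_ofReal hint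
    (ae_of_all _ fun y => mul_nonneg (hK0 x y) (sq_nonneg _))]
  exact lintegral_congr fun y => ENNReal.ofReal_mul (hK0 x y)

theorem exists_nonlocal_poincare [μ.IsOpenPosMeasure] {k : X → X → ℝ} {δ : ℝ}
    (hk : Continuous (uncurry k)) (hk0 : ∀ x y, 0 ≤ k x y) (hδ : 0 < δ)
    (hkδ : ∀ x y, dist x y < δ → 0 < k x y) (hRo : IsOpen R) (hRc : IsConnected R)
    (hRb : IsBounded R) :
    ∃ C > 0, ∀ z : X → ℝ, MemLp z 2 (μ.restrict R) → ∫ x in R, z x ∂μ = 0 →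
      C * ∫ x in R, z x ^ 2 ∂μ ≤ ∫ x in R, ∫ y in R, k x y * (z y - z x) ^ 2 ∂μ ∂μ := by
  have hRm := hRo.measurableSet
  have : IsFiniteMeasure (μ.restrict R) := isFiniteMeasure_restrict.2 hRb.measure_lt_top.ne
  obtain ⟨n, c₀, hc₀, hlow⟩ := exists_pos_le_iterKernel (μ := μ) hk hk0 hδ hkδ hRo hRc hRb
  obtain ⟨c, hc, hup⟩ := exists_kernelEnergy_iterKernel_le (μ := μ) hk hk0 hRm hRb n
  obtain ⟨S, hS⟩ := exists_forall_le_of_isBounded hk hRb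
  have hV : 0 < μ.real R :=
    ENNReal.toReal_pos (hRo.measure_ne_zero μ hRc.nonempty) hRb.measure_lt_top.ne
  -- `+ 1` keeps the constant positive when `c = 0`.
  refine ⟨2 * μ.real R * c₀ / (c.toReal + 1), by positivity, fun z hz hz0 => ?_⟩
  wlog hzm : Measurable z generalizing z
  · have hae := hz.aestronglyMeasurable.ae_eq_mk
    convert this _ (hz.ae_eq hae) ((integral_congr_ae hae).symm.trans hz0)
      hz.aestronglyMeasurable.stronglyMeasurable_mk.measurable using 1
    · exact congrArg _ (integral_congr_ae (hae.fun_comp (· ^ 2)))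
    · exact integral_integral_mul_sub_sq_congr_ae hae
  have hD : ∫⁻ x in R, ∫⁻ y in R, ENNReal.ofReal ((z y - z x) ^ 2) ∂μ ∂μ =
      ENNReal.ofReal (2 * μ.real R * ∫ x in R, z x ^ 2 ∂μ) := by
    rw [lintegral_lintegral_ofReal_sub_sq hz, measureReal_restrict_apply_univ, hz0]
    ring_nf
  have hfin : kernelEnergy μ R k z ≠ ⊤ :=
    ((kernelEnergy_mono hRm hS z).trans_lt (by rw [kernelEnergy_const, hD]; finiteness)).ne
  have key : c₀ * (2 * μ.real R * ∫ x in R, z x ^ 2 ∂μ) ≤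
      c.toReal * (kernelEnergy μ R k z).toReal := by
    rw [← ENNReal.toReal_mul, ← ENNReal.ofReal_le_iff_le_toReal (by finiteness),
      ENNReal.ofReal_mul hc₀.le, ← hD, ← kernelEnergy_const]
    exact (kernelEnergy_mono hRm hlow z).trans (hup z hzm)
  rw [integral_integral_eq_toReal_kernelEnergy hk hk0 hRm hRb hzm hz, div_mul_eq_mul_div,
    div_le_iff₀ (by positivity)]
  nlinarith [(kernelEnergy μ R k z).toReal_nonneg]

end NonlocalPoincare

theorem nonlocal_poincare_inequality_general
    (N : ℕ)
    (R : Set (EuclideanSpace ℝ (Fin N)))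
    (hR : IsOpen R) (hRconn : IsConnected R) (hRb : Bornology.IsBounded R)
    (J : EuclideanSpace ℝ (Fin N) → ℝ)
    (hJcont : Continuous J) (hJnonneg : ∀ z, 0 ≤ J z)
    (hJ0 : 0 < J 0) :
    ∃ C > 0, ∀ z : EuclideanSpace ℝ (Fin N) → ℝ,
      MemLp z 2 (volume.restrict R) →
      (∫ x in R, z x) = 0 →
      C * ∫ x in R, (z x) ^ 2 ≤ ∫ x in R, ∫ y in R, J (x - y) * (z y - z x) ^ 2 := by
  obtain ⟨δ, hδ, hJδ⟩ :=
    Metric.eventually_nhds_iff.1 (hJcont.continuousAt.eventually (lt_mem_nhds hJ0))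
  exact NonlocalPoincare.exists_nonlocal_poincare (k := fun x y => J (x - y)) (by fun_prop)
    (fun _ _ => hJnonneg _) hδ (fun x y hxy => hJδ (by rwa [dist_zero_right, ← dist_eq_norm]))
    hR hRconn hRb

theorem nonlocal_poincare_inequality
    (N : ℕ)
    (R : Set (EuclideanSpace ℝ (Fin N)))
    (hR : IsOpen R) (hRconn : IsConnected R) (hRb : Bornology.IsBounded R)
    (J : EuclideanSpace ℝ (Fin N) → ℝ)
    (hJcont : Continuous J) (hJnonneg : ∀ z, 0 ≤ J z)
    (hJsym : ∀ z, J (-z) = J z)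
    (hJint : Integrable J)
    (hJ0 : 0 < J 0) :
    ∃ C > 0, ∀ z : EuclideanSpace ℝ (Fin N) → ℝ,
      MemLp z 2 (volume.restrict R) →
      (∫ x in R, z x) = 0 →
      C * ∫ x in R, (z x) ^ 2 ≤ ∫ x in R, ∫ y in R, J (x - y) * (z y - z x) ^ 2 :=
  nonlocal_poincare_inequality_general N R hR hRconn hRb J hJcont hJnonneg hJ0
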